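/- Both roots of the complex quadratic s² + (φ + iξ)s + (α + iβ) = 0, where α, β, φ, ξ are real, have strictly negative real part if and only if φ > 0 and αφ² + βξφ − β² > 0. -/

import Mathlib

/-!
Factor the quadratic as `(s - s₁) * (s - s₂)`, so that `φ + iξ = -(s₁ + s₂)` and
`α + iβ = s₁ s₂`. Then `φ = -(Re s₁ + Re s₂)`, and expanding the real and imaginary parts gives
`α φ² + β ξ φ - β² = Re s₁ · Re s₂ · |s₁ + conj s₂|²`, where `|s₁ + conj s₂|² ≥ (Re s₁ + Re s₂)²`.
Hence the two conditions say exactly that `Re s₁ + Re s₂ < 0` and `Re s₁ · Re s₂ > 0`.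
-/

open Complex ComplexConjugate

theorem exists_neg_add_eq_and_mul_eq {K : Type*} [Field K] [IsSepClosed K] [NeZero (2 : K)]
    (b c : K) : ∃ s₁ s₂ : K, b = -(s₁ + s₂) ∧ c = s₁ * s₂ := by
  obtain ⟨d, hd⟩ := IsSepClosed.exists_eq_mul_self (b ^ 2 - 4 * c)
  refine ⟨(-b + d) / 2, (-b - d) / 2, by field_simp; ring, ?_⟩
  field_simp
  linear_combination -hd

theorem forall_mul_sub_eq_zero_imp_iff {R : Type*} [CommRing R] [NoZeroDivisors R]
    {p : R → Prop} {a b : R} : (∀ s, (s - a) * (s - b) = 0 → p s) ↔ p a ∧ p b := by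
  simp only [mul_eq_zero, sub_eq_zero, or_imp, forall_and, forall_eq]

theorem neg_and_neg_iff_of_sq_add_le {x y N : ℝ} (hN : (x + y) ^ 2 ≤ N) :
    x < 0 ∧ y < 0 ↔ 0 < -(x + y) ∧ 0 < x * y * N := by
  constructor
  · rintro ⟨hx, hy⟩
    have hN_pos : 0 < N := lt_of_lt_of_le (by nlinarith) hN
    exact ⟨by linarith, mul_pos (mul_pos_of_neg_of_neg hx hy) hN_pos⟩
  · rintro ⟨hsum, hprod⟩
    have hxy : 0 < x * y := pos_of_mul_pos_left hprod (by nlinarith)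
    constructor <;> nlinarith

namespace Complex

variable {s₁ s₂ : ℂ} {φ ξ α β : ℝ}

theorem re_eq_of_ofReal_add_mul_I_eq (hb : (φ + ξ * I : ℂ) = -(s₁ + s₂)) :
    φ = -(s₁.re + s₂.re) := by
  simpa using congrArg re hb

theorem mul_sq_add_mul_mul_sub_sq_eq_re_mul_re_mul_normSq (hb : (φ + ξ * I : ℂ) = -(s₁ + s₂))
    (hc : (α + β * I : ℂ) = s₁ * s₂) :
    α * φ ^ 2 + β * ξ * φ - β ^ 2 = s₁.re * s₂.re * normSq (s₁ + conj s₂) := by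
  obtain ⟨hφ, hξ⟩ := Complex.ext_iff.mp hb
  obtain ⟨hα, hβ⟩ := Complex.ext_iff.mp hc
  simp only [add_re, add_im, ofReal_re, ofReal_im, mul_re, mul_im, I_re, I_im, neg_re,
    neg_im, mul_zero, mul_one, sub_zero, add_zero, zero_add] at hφ hξ hα hβ
  subst hφ hξ hα hβ
  simp only [normSq_apply, add_re, add_im, conj_re, conj_im]
  ring

theorem sq_add_re_le_normSq_add_conj (s₁ s₂ : ℂ) :
    (s₁.re + s₂.re) ^ 2 ≤ normSq (s₁ + conj s₂) := by
  simpa [sq] using re_sq_le_normSq (s₁ + conj s₂)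

end Complex

theorem stmt2 (α β φ ξ : ℝ) :
    (∀ s : ℂ, s ^ 2 + (φ + ξ * Complex.I) * s + (α + β * Complex.I) = 0 → s.re < 0) ↔
      (0 < φ ∧ 0 < α * φ ^ 2 + β * ξ * φ - β ^ 2) := by
  obtain ⟨s₁, s₂, hb, hc⟩ := exists_neg_add_eq_and_mul_eq (φ + ξ * I : ℂ) (α + β * I)
  have hfactor : ∀ s : ℂ, s ^ 2 + (φ + ξ * I) * s + (α + β * I) = (s - s₁) * (s - s₂) := by
    intro s
    rw [hb, hc]
    ring
  simp_rw [hfactor, forall_mul_sub_eq_zero_imp_iff]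
  rw [mul_sq_add_mul_mul_sub_sq_eq_re_mul_re_mul_normSq hb hc, re_eq_of_ofReal_add_mul_I_eq hb]
  exact neg_and_neg_iff_of_sq_add_le (sq_add_re_le_normSq_add_conj s₁ s₂)
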